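/- arXiv:2402.14794 — 4 statements merged into one kernel-verified Lean document; each statement's English description precedes it below -/
import Mathlib

section
/- Let A be a unital C*-algebra, α a one-parameter group of *-automorphisms of A, and ω a state on A with GNS data (π, H, Ω). Assume Ω is separating for the double commutant M = π(A)'' and that (A, α, ω) is mixing. Then for every a ∈ A, the operators π(α_t(a)) converge to ω(a)·1 in the weak operator topology on B(H), both as t → +∞ and as t → −∞. -/
/-!
Tested against the cyclic vectors `π b Ω`, mixing says exactly that `π (α t a) Ω` tends weakly to
`ω a • Ω`, since `⟪π b Ω, π (α t a) Ω⟫ = ω (b⋆ * α t a)`; the operators `π (α t a)` are bounded by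
`‖a‖`, so this extends to all test vectors. A vector separating for `π(A)''` is cyclic for the
commutant `π(A)'`, and for `X ∈ π(A)'` we have `⟪v, π (α t a) (X Ω)⟫ = ⟪X† v, π (α t a) Ω⟫`, which
gives weak operator convergence on the dense set `π(A)' Ω`, hence everywhere.
For `t → -∞`, invariance gives `ω (b * α t a) = ω (α (-t) b * a) = conj (ω (a⋆ * α (-t) b⋆))`,
which reduces the claim to mixing as `t → +∞`.
-/

open Filter
open scoped ComplexOrder ComplexInnerProductSpace

/-- Convergence in the weak operator topology along a filter. -/
def WOTTendsto {H : Type*} [NormedAddCommGroup H] [InnerProductSpace ℂ H]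
    (T : ℝ → (H →L[ℂ] H)) (l : Filter ℝ) (S : H →L[ℂ] H) : Prop :=
  ∀ v w : H, Tendsto (fun t => ⟪v, T t w⟫) l (nhds ⟪v, S w⟫)

open Topology Submodule ComplexConjugate

theorem ContinuousLinearMap.tendsto_apply_of_dense_span {ι 𝕜 𝕜₂ E F : Type*}
    [NontriviallyNormedField 𝕜] [NontriviallyNormedField 𝕜₂] {σ : 𝕜 →+* 𝕜₂} [RingHomIsometric σ]
    [SeminormedAddCommGroup E] [NormedSpace 𝕜 E] [SeminormedAddCommGroup F] [NormedSpace 𝕜₂ F]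
    {l : Filter ι} {T : ι → E →SL[σ] F}
    {S : E →SL[σ] F} {C : ℝ} (hT : ∀ i x, ‖T i x‖ ≤ C * ‖x‖) {s : Set E}
    (hs : (span 𝕜 s).topologicalClosure = ⊤) (h : ∀ x ∈ s, Tendsto (T · x) l (𝓝 (S x)))
    (x : E) : Tendsto (T · x) l (𝓝 (S x)) := by
  let P : Submodule 𝕜 E :=
    { carrier := {x | Tendsto (T · x) l (𝓝 (S x))}
      add_mem' := fun hx hy => by simpa using hx.add hy
      zero_mem' := by simpa using tendsto_const_nhds
      smul_mem' := fun c _ hx => by simpa using hx.const_smul (σ c) }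
  have hequi : Equicontinuous ((↑) ∘ T) :=
    ((NormedSpace.equicontinuous_TFAE T).out 3 1).mp (by exact ⟨C, hT⟩)
  have hP : IsClosed (P : Set E) := hequi.isClosed_setOfPred_tendsto S.continuous
  have hsP : (span 𝕜 s).topologicalClosure ≤ P := topologicalClosure_minimal _ (span_le.2 h) hP
  exact hsP (hs ▸ mem_top)

theorem tendsto_inner_of_dense_span {ι 𝕜 E : Type*} [RCLike 𝕜] [SeminormedAddCommGroup E]
    [InnerProductSpace 𝕜 E] {l : Filter ι} {x : ι → E} {y : E} {C : ℝ} (hx : ∀ i, ‖x i‖ ≤ C)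
    {s : Set E} (hs : (span 𝕜 s).topologicalClosure = ⊤)
    (h : ∀ v ∈ s, Tendsto (fun i => inner 𝕜 v (x i)) l (𝓝 (inner 𝕜 v y))) (v : E) :
    Tendsto (fun i => inner 𝕜 v (x i)) l (𝓝 (inner 𝕜 v y)) := by
  refine ContinuousLinearMap.tendsto_apply_of_dense_span (T := fun i => innerSLFlip 𝕜 (x i))
    (S := innerSLFlip 𝕜 y) (C := C) (fun i w => ?_) hs h v
  calc ‖inner 𝕜 w (x i)‖ ≤ ‖w‖ * ‖x i‖ := norm_inner_le_norm _ _
    _ ≤ C * ‖w‖ := by rw [mul_comm]; gcongr; exact hx i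

section Commutant

variable {𝕜 E : Type*} [RCLike 𝕜] [NormedAddCommGroup E] [InnerProductSpace 𝕜 E] [CompleteSpace E]

open ContinuousLinearMap.IsIdempotentElem in
theorem IsStarProjection.mem_centralizer_of_range_mem_invtSubmodule {S : Set (E →L[𝕜] E)}
    (hS : ∀ y ∈ S, star y ∈ S) {e : E →L[𝕜] E} (he : IsStarProjection e)
    (h : ∀ y ∈ S, e.range ∈ Module.End.invtSubmodule y) :
    e ∈ S.centralizer := by
  intro y hy
  have hy₁ : e * y * e = y * e := conj_eq_of_range_mem_invtSubmodule he.isIdempotentElem (h y hy)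
  have hy₂ : e * star y * e = star y * e :=
    conj_eq_of_range_mem_invtSubmodule he.isIdempotentElem (h _ (hS y hy))
  have hy₃ : e * y * e = e * y := by
    simpa [star_mul, he.isSelfAdjoint.star_eq, mul_assoc] using congr(star $hy₂)
  rw [← hy₁, hy₃]

theorem dense_span_centralizer_orbit_of_separating {S : Set (E →L[𝕜] E)}
    (hS : ∀ y ∈ S, star y ∈ S) {Ω : E}
    (hsep : ∀ X ∈ S.centralizer.centralizer, X Ω = 0 → X = 0) :
    (span 𝕜 ((· Ω) '' S.centralizer)).topologicalClosure = ⊤ := by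
  set K := (span 𝕜 ((· Ω) '' S.centralizer)).topologicalClosure
  have hK : ∀ y ∈ S.centralizer, K ∈ Module.End.invtSubmodule y := by
    refine fun y hy => topologicalClosure_mem_invtSubmodule ?_
    rw [Module.End.mem_invtSubmodule, span_le]
    rintro _ ⟨X, hX, rfl⟩
    exact subset_span ⟨y * X, Set.mul_mem_centralizer hy hX, rfl⟩
  have hP : K.starProjection ∈ S.centralizer.centralizer :=
    isStarProjection_starProjection.mem_centralizer_of_range_mem_invtSubmodule
      (fun y hy => Set.star_mem_centralizer' hS hy) (by simpa using hK)
  have hΩ : Ω ∈ K := le_topologicalClosure _ (subset_span ⟨1, Set.one_mem_centralizer, rfl⟩)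
  have hP1 : 1 - K.starProjection = 0 :=
    hsep _ (show _ ∈ Subring.centralizer _ from sub_mem (one_mem _) hP)
      (by simp [starProjection_eq_self_iff.mpr hΩ])
  rw [← K.range_starProjection, ← sub_eq_zero.mp hP1]
  exact LinearMap.range_id

end Commutant

theorem wotTendsto_smul_one_of_tendsto_inner_apply {H : Type*} [NormedAddCommGroup H]
    [InnerProductSpace ℂ H] [CompleteSpace H] {S : Set (H →L[ℂ] H)}
    (hS : ∀ y ∈ S, star y ∈ S) {Ω : H}
    (hsep : ∀ X ∈ S.centralizer.centralizer, X Ω = 0 → X = 0) {l : Filter ℝ}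
    {T : ℝ → H →L[ℂ] H} (hTS : ∀ t, T t ∈ S) {C : ℝ} (hT : ∀ t, ‖T t‖ ≤ C) {c : ℂ}
    (hΩ : ∀ v, Tendsto (fun t => ⟪v, T t Ω⟫) l (𝓝 ⟪v, c • Ω⟫)) :
    WOTTendsto T l (c • 1) := by
  intro v
  refine ContinuousLinearMap.tendsto_apply_of_dense_span
    (T := fun t => innerSL ℂ v ∘L T t) (S := innerSL ℂ v ∘L (c • 1)) (C := ‖v‖ * C) (fun t w => ?_)
    (dense_span_centralizer_orbit_of_separating hS hsep) ?_
  · calc ‖⟪v, T t w⟫‖ ≤ ‖v‖ * ‖T t w‖ := norm_inner_le_norm _ _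
      _ ≤ ‖v‖ * (C * ‖w‖) := by gcongr; exact (T t).le_of_opNorm_le (hT t) w
      _ = ‖v‖ * C * ‖w‖ := by ring
  · rintro _ ⟨X, hX, rfl⟩
    have hcomm : ∀ t, T t (X Ω) = X (T t Ω) := fun t => congr($(hX (T t) (hTS t)) Ω)
    simpa [hcomm, ← ContinuousLinearMap.adjoint_inner_left X] using hΩ (X.adjoint v)

theorem norm_map_starAlgEquiv_apply_le {A : Type*} [NormedRing A] [StarRing A] [CStarRing A]
    [CompleteSpace A] [NormedAlgebra ℂ A] [StarModule ℂ A] {H : Type*} [NormedAddCommGroup H]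
    [InnerProductSpace ℂ H] [CompleteSpace H] (π : A →⋆ₐ[ℂ] (H →L[ℂ] H)) (β : A ≃⋆ₐ[ℂ] A)
    (a : A) : ‖π (β a)‖ ≤ ‖a‖ := by
  let _ : CStarAlgebra A := ⟨⟩
  exact (NonUnitalStarAlgHom.norm_apply_le π (β a)).trans_eq (StarAlgEquiv.norm_map β a)

section GNS

variable {A H : Type*} [Ring A] [StarRing A] [Algebra ℂ A] [NormedAddCommGroup H]
  [InnerProductSpace ℂ H] [CompleteSpace H] {ω : A →ₗ[ℂ] ℂ} {π : A →⋆ₐ[ℂ] (H →L[ℂ] H)} {Ω : H}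

theorem inner_map_apply_map_apply_of_eq_inner (hrep : ∀ a, ω a = ⟪Ω, π a Ω⟫) (a b : A) :
    ⟪π a Ω, π b Ω⟫ = ω (star a * b) := by
  rw [hrep, map_mul, map_star, ContinuousLinearMap.star_eq_adjoint]
  exact (ContinuousLinearMap.adjoint_inner_right (π a) Ω (π b Ω)).symm

theorem map_star_of_eq_inner (hrep : ∀ a, ω a = ⟪Ω, π a Ω⟫) (a : A) :
    ω (star a) = conj (ω a) := by
  rw [hrep, hrep, map_star, ContinuousLinearMap.star_eq_adjoint,
    ContinuousLinearMap.adjoint_inner_right, inner_conj_symm]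

end GNS

theorem tendsto_apply_mul_map_atBot_of_atTop {A : Type*} [Ring A] [StarRing A] [Algebra ℂ A]
    (α : ℝ → (A ≃⋆ₐ[ℂ] A)) (hα0 : ∀ a, α 0 a = a) (hαadd : ∀ s t a, α (s + t) a = α s (α t a))
    {ω : A →ₗ[ℂ] ℂ} (hstar : ∀ a, ω (star a) = conj (ω a)) (hinv : ∀ t a, ω (α t a) = ω a)
    (hmix : ∀ a b, Tendsto (fun t => ω (b * α t a)) atTop (𝓝 (ω a * ω b))) (a b : A) :
    Tendsto (fun t => ω (b * α t a)) atBot (𝓝 (ω a * ω b)) := by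
  have hflip : ∀ t, ω (b * α t a) = conj (ω (star a * α (-t) (star b))) := by
    intro t
    rw [← hstar, star_mul, star_star, map_star, star_star, ← hinv (-t), map_mul, ← hαadd,
      neg_add_cancel, hα0]
  have hlim : conj (ω (star b) * ω (star a)) = ω a * ω b := by
    simp [hstar, mul_comm]
  simpa only [hflip, hlim, Function.comp_def] using
    (Complex.continuous_conj.tendsto _).comp ((hmix (star b) (star a)).comp tendsto_neg_atBot_atTop)

theorem wotTendsto_map_map_of_tendsto_apply_mul {A : Type*} [NormedRing A] [StarRing A]
    [CStarRing A] [CompleteSpace A] [NormedAlgebra ℂ A] [StarModule ℂ A]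
    {H : Type*} [NormedAddCommGroup H] [InnerProductSpace ℂ H] [CompleteSpace H]
    (α : ℝ → (A ≃⋆ₐ[ℂ] A)) {ω : A →ₗ[ℂ] ℂ} {π : A →⋆ₐ[ℂ] (H →L[ℂ] H)} {Ω : H}
    (hrep : ∀ a, ω a = ⟪Ω, π a Ω⟫)
    (hcyc : (Submodule.span ℂ (Set.range fun b : A => π b Ω)).topologicalClosure = ⊤)
    (hsep : ∀ X ∈ Set.centralizer (Set.centralizer (Set.range fun b : A => π b)),
        X Ω = 0 → X = 0)
    {l : Filter ℝ} (hmix : ∀ a b, Tendsto (fun t => ω (b * α t a)) l (𝓝 (ω a * ω b))) (a : A) :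
    WOTTendsto (fun t => π (α t a)) l (ω a • 1) := by
  have hbound : ∀ t, ‖π (α t a)‖ ≤ ‖a‖ := fun t => norm_map_starAlgEquiv_apply_le π (α t) a
  refine wotTendsto_smul_one_of_tendsto_inner_apply (S := Set.range fun b : A => π b)
    ?_ hsep (fun t => ⟨_, rfl⟩) hbound ?_
  · rintro _ ⟨b, rfl⟩
    exact ⟨star b, map_star π b⟩
  refine tendsto_inner_of_dense_span (C := ‖a‖ * ‖Ω‖)
    (fun t => (π (α t a)).le_of_opNorm_le (hbound t) Ω) hcyc ?_
  rintro _ ⟨b, rfl⟩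
  have hΩ : ⟪π b Ω, Ω⟫ = ω (star b) := by
    simpa using inner_map_apply_map_apply_of_eq_inner hrep b 1
  simpa [inner_smul_right, hΩ, inner_map_apply_map_apply_of_eq_inner hrep] using hmix a (star b)

theorem stmt0_general
    {A : Type*} [NormedRing A] [StarRing A] [CStarRing A] [CompleteSpace A]
    [NormedAlgebra ℂ A] [StarModule ℂ A]
    {H : Type*} [NormedAddCommGroup H] [InnerProductSpace ℂ H] [CompleteSpace H]
    -- one-parameter group of *-automorphisms
    (α : ℝ → (A ≃⋆ₐ[ℂ] A))
    (hα0 : ∀ a : A, α 0 a = a)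
    (hαadd : ∀ s t : ℝ, ∀ a : A, α (s + t) a = α s (α t a))
    -- state
    (ω : A →ₗ[ℂ] ℂ)
    -- GNS data
    (π : A →⋆ₐ[ℂ] (H →L[ℂ] H)) (Ω : H)
    (hrep : ∀ a : A, ω a = ⟪Ω, π a Ω⟫)
    (hcyc : (Submodule.span ℂ (Set.range fun b : A => π b Ω)).topologicalClosure = ⊤)
    -- Ω separating for M = π(A)''
    (hsep : ∀ X ∈ Set.centralizer (Set.centralizer (Set.range fun b : A => π b)),
        X Ω = 0 → X = 0)
    -- mixing
    (hinv : ∀ t : ℝ, ∀ a : A, ω (α t a) = ω a)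
    (hmix : ∀ a b : A, Tendsto (fun t => ω (b * α t a)) atTop (nhds (ω a * ω b))) :
    ∀ a : A,
      WOTTendsto (fun t => π (α t a)) atTop (ω a • (1 : H →L[ℂ] H)) ∧
      WOTTendsto (fun t => π (α t a)) atBot (ω a • (1 : H →L[ℂ] H)) := by
  have hmixBot := tendsto_apply_mul_map_atBot_of_atTop α hα0 hαadd (map_star_of_eq_inner hrep)
    hinv hmix
  exact fun a => ⟨wotTendsto_map_map_of_tendsto_apply_mul α hrep hcyc hsep hmix a,
    wotTendsto_map_map_of_tendsto_apply_mul α hrep hcyc hsep hmixBot a⟩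

/-- If `ω` is a state on a unital C*-algebra `A` with GNS data `(π, H, Ω)`,
`Ω` is separating for the double commutant `M = π(A)''`, and `(A, α, ω)` is mixing, then for
every `a ∈ A` the operators `π (α t a)` converge to `ω a • 1` in the weak operator topology,
both as `t → +∞` and as `t → -∞`. -/
theorem stmt0
    {A : Type*} [NormedRing A] [StarRing A] [CStarRing A] [CompleteSpace A]
    [NormedAlgebra ℂ A] [StarModule ℂ A]
    {H : Type*} [NormedAddCommGroup H] [InnerProductSpace ℂ H] [CompleteSpace H]
    -- one-parameter group of *-automorphisms
    (α : ℝ → (A ≃⋆ₐ[ℂ] A))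
    (hα0 : ∀ a : A, α 0 a = a)
    (hαadd : ∀ s t : ℝ, ∀ a : A, α (s + t) a = α s (α t a))
    -- state
    (ω : A →ₗ[ℂ] ℂ)
    (hω1 : ω 1 = 1)
    (hωpos : ∀ a : A, 0 ≤ ω (star a * a))
    -- GNS data
    (π : A →⋆ₐ[ℂ] (H →L[ℂ] H)) (Ω : H) (hΩnorm : ‖Ω‖ = 1)
    (hrep : ∀ a : A, ω a = ⟪Ω, π a Ω⟫)
    (hcyc : (Submodule.span ℂ (Set.range fun b : A => π b Ω)).topologicalClosure = ⊤)
    -- Ω separating for M = π(A)''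
    (hsep : ∀ X ∈ Set.centralizer (Set.centralizer (Set.range fun b : A => π b)),
        X Ω = 0 → X = 0)
    -- mixing
    (hinv : ∀ t : ℝ, ∀ a : A, ω (α t a) = ω a)
    (hmix : ∀ a b : A, Tendsto (fun t => ω (b * α t a)) atTop (nhds (ω a * ω b))) :
    ∀ a : A,
      WOTTendsto (fun t => π (α t a)) atTop (ω a • (1 : H →L[ℂ] H)) ∧
      WOTTendsto (fun t => π (α t a)) atBot (ω a • (1 : H →L[ℂ] H)) :=
  stmt0_general α hα0 hαadd ω π Ω hrep hcyc hsep hinv hmix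
end

section
/- Let H be a complex Hilbert space and M ⊆ B(H) a von Neumann algebra that is the weak-operator closure (equivalently the double commutant) of a unital *-subalgebra N ⊆ M. Let Ψ_φ and Ψ_ψ be unit vectors in H defining the vector states φ = ⟪Ψ_φ, (·) Ψ_φ⟫ and ψ = ⟪Ψ_ψ, (·) Ψ_ψ⟫ on M. Let γ^φ and γ^ψ be one-parameter groups of *-automorphisms of M that commute (γ^φ_t ∘ γ^ψ_s = γ^ψ_s ∘ γ^φ_t for all s, t), with φ invariant under γ^φ and ψ invariant under γ^ψ. Assume that for every X ∈ N: every WOT cluster point of (γ^φ_t X) as t → +∞ and as t → −∞ is a scalar multiple of the identity; every WOT cluster point of (γ^ψ_t X) as t → +∞ and as t → −∞ is a scalar multiple of the identity; there exists a WOT cluster point of each of these nets; and every WOT cluster point of (γ^ψ_{−t}(γ^φ_t X)) as t → +∞ exists and is a scalar multiple of the identity. Then for all X ∈ N, γ^φ_t X → φ(X)·1 and γ^ψ_t X → ψ(X)·1 in the weak operator topology as t → ±∞, and φ(X) = ψ(X) for every X ∈ M. -/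
/-!
The nets `γ t X` are norm-bounded, so by compactness of bounded sets in the weak operator topology
they converge as soon as all their cluster points agree. A scalar cluster point `c • 1` is pinned
down by any unit vector whose state is constant along the net: invariance gives `c = φ(X)` for
`γφ` and `c = ψ(X)` for `γψ`. For the combined net `γψ (-t) (γφ t X)`, its state at `Ψψ` is that
of `γφ t X` and its state at `Ψφ` is that of `γψ (-t) X`; both converge, so the scalar cluster
point equals both `φ(X)` and `ψ(X)`. Finally two vector states agreeing on `N` agree on `N''`, by
von Neumann's density theorem applied to the vector `(Ψφ, Ψψ)` of `H ⊕ H`.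
-/

open Filter
open scoped ComplexInnerProductSpace

/-- `S` is a cluster point of the net `T` along the filter `l` in the weak operator topology
(the topology of pointwise convergence of the sesquilinear forms `(v, w) ↦ ⟪v, T w⟫`). -/
def IsWOTClusterPt {H : Type*} [NormedAddCommGroup H] [InnerProductSpace ℂ H]
    (S : H →L[ℂ] H) (l : Filter ℝ) (T : ℝ → (H →L[ℂ] H)) : Prop :=
  MapClusterPt (fun v w : H => ⟪v, S w⟫) l (fun t => fun v w : H => ⟪v, T t w⟫)

open Topology

section WeakOperatorTopology

variable {H : Type*} [NormedAddCommGroup H] [InnerProductSpace ℂ H]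

theorem exists_inner_apply_eq_of_sesquilinear [CompleteSpace H] (f : H → H → ℂ) (C : ℝ)
    (add_left : ∀ v v' w, f (v + v') w = f v w + f v' w)
    (smul_left : ∀ (c : ℂ) v w, f (c • v) w = starRingEnd ℂ c • f v w)
    (add_right : ∀ v w w', f v (w + w') = f v w + f v w')
    (smul_right : ∀ (c : ℂ) v w, f v (c • w) = c • f v w)
    (bound : ∀ v w, ‖f v w‖ ≤ C * ‖v‖ * ‖w‖) :
    ∃ S : H →L[ℂ] H, ∀ v w, ⟪v, S w⟫ = f v w := by
  let B : H →L⋆[ℂ] H →L[ℂ] ℂ :=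
    (LinearMap.mk₂'ₛₗ (starRingEnd ℂ) (RingHom.id ℂ) f add_left smul_left add_right
      smul_right).mkContinuous₂ C bound
  refine ⟨(InnerProductSpace.continuousLinearMapOfBilin B).adjoint, fun v w => ?_⟩
  rw [ContinuousLinearMap.adjoint_inner_right, InnerProductSpace.continuousLinearMapOfBilin_apply]
  rfl

theorem exists_wotTendsto_ultrafilter_of_norm_le [CompleteSpace H] {T : ℝ → (H →L[ℂ] H)} {C : ℝ}
    (hT : ∀ t, ‖T t‖ ≤ C) (U : Ultrafilter ℝ) : ∃ S, WOTTendsto T U S := by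
  have bound : ∀ v w t, ‖⟪v, T t w⟫‖ ≤ C * ‖v‖ * ‖w‖ := fun v w t =>
    calc ‖⟪v, T t w⟫‖ ≤ ‖v‖ * (‖T t‖ * ‖w‖) :=
          (norm_inner_le_norm _ _).trans (by gcongr; exact (T t).le_opNorm w)
      _ ≤ ‖v‖ * (C * ‖w‖) := by gcongr; exact hT t
      _ = C * ‖v‖ * ‖w‖ := by ring
  have hlim : ∀ v w, ∃ z, Tendsto (fun t => ⟪v, T t w⟫) U (𝓝 z) := fun v w => by
    obtain ⟨z, -, hz⟩ := (isCompact_closedBall (0 : ℂ) (C * ‖v‖ * ‖w‖)).ultrafilter_le_nhds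
      (U.map fun t => ⟪v, T t w⟫) <| by
        rw [le_principal_iff, Ultrafilter.mem_coe, Ultrafilter.mem_map]
        exact univ_mem' fun t => by simpa using bound v w t
    exact ⟨z, hz⟩
  choose f hf using hlim
  obtain ⟨S, hS⟩ := exists_inner_apply_eq_of_sesquilinear f C
    (fun v v' w => tendsto_nhds_unique (hf (v + v') w)
      (by simpa only [inner_add_left] using (hf v w).add (hf v' w)))
    (fun c v w => tendsto_nhds_unique (hf (c • v) w)
      (by simpa only [inner_smul_left, smul_eq_mul] using (hf v w).const_smul (starRingEnd ℂ c)))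
    (fun v w w' => tendsto_nhds_unique (hf v (w + w'))
      (by simpa only [map_add, inner_add_right] using (hf v w).add (hf v w')))
    (fun c v w => tendsto_nhds_unique (hf v (c • w))
      (by simpa only [map_smul, inner_smul_right, smul_eq_mul] using (hf v w).const_smul c))
    (fun v w => le_of_tendsto (hf v w).norm (Eventually.of_forall (bound v w)))
  exact ⟨S, fun v w => hS v w ▸ hf v w⟩

theorem IsWOTClusterPt.inner_apply_eq_of_tendsto {S : H →L[ℂ] H} {l : Filter ℝ}
    {T : ℝ → (H →L[ℂ] H)} (hS : IsWOTClusterPt S l T) {v w : H} {a : ℂ}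
    (h : Tendsto (fun t => ⟪v, T t w⟫) l (𝓝 a)) : ⟪v, S w⟫ = a := by
  obtain ⟨U, hUl, hU⟩ := mapClusterPt_iff_ultrafilter.mp hS
  exact tendsto_nhds_unique (tendsto_pi_nhds.mp (tendsto_pi_nhds.mp hU v) w) (h.mono_left hUl)

theorem wotTendsto_of_forall_isWOTClusterPt_eq [CompleteSpace H] {T : ℝ → (H →L[ℂ] H)}
    {l : Filter ℝ} {C : ℝ} (hT : ∀ t, ‖T t‖ ≤ C) {A : H →L[ℂ] H}
    (hA : ∀ S, IsWOTClusterPt S l T → S = A) :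
    WOTTendsto T l A := by
  intro v w
  refine (tendsto_iff_ultrafilter _ _ _).mpr fun U hUl => ?_
  obtain ⟨S, hS⟩ := exists_wotTendsto_ultrafilter_of_norm_le hT U
  have hSA : S = A := hA S <| mapClusterPt_iff_ultrafilter.mpr
    ⟨U, hUl, tendsto_pi_nhds.mpr fun v => tendsto_pi_nhds.mpr fun w => hS v w⟩
  exact hSA ▸ hS v w

theorem inner_smul_one_apply_self {Ψ : H} (hΨ : ‖Ψ‖ = 1) (c : ℂ) :
    ⟪Ψ, (c • (1 : H →L[ℂ] H)) Ψ⟫ = c := by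
  simp [inner_self_eq_norm_sq_to_K, hΨ]

theorem wotTendsto_smul_one_of_inner_apply_self_eq [CompleteSpace H] {T : ℝ → (H →L[ℂ] H)}
    {l : Filter ℝ} {C : ℝ} (hT : ∀ t, ‖T t‖ ≤ C) {Ψ : H} (hΨ : ‖Ψ‖ = 1) {a : ℂ}
    (hΨT : ∀ t, ⟪Ψ, T t Ψ⟫ = a)
    (hscalar : ∀ S, IsWOTClusterPt S l T → ∃ c : ℂ, S = c • (1 : H →L[ℂ] H)) :
    WOTTendsto T l (a • (1 : H →L[ℂ] H)) := by
  refine wotTendsto_of_forall_isWOTClusterPt_eq hT fun S hS => ?_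
  obtain ⟨c, rfl⟩ := hscalar S hS
  have hc := hS.inner_apply_eq_of_tendsto (v := Ψ) (w := Ψ) (a := a)
    (by simpa only [hΨT] using tendsto_const_nhds)
  rw [inner_smul_one_apply_self hΨ] at hc
  rw [hc]

theorem WOTTendsto.tendsto_inner_apply_self {T : ℝ → (H →L[ℂ] H)} {l : Filter ℝ} {a : ℂ}
    (hT : WOTTendsto T l (a • (1 : H →L[ℂ] H))) {Ψ : H} (hΨ : ‖Ψ‖ = 1) :
    Tendsto (fun t => ⟪Ψ, T t Ψ⟫) l (𝓝 a) := by
  simpa only [inner_smul_one_apply_self hΨ] using hT Ψ Ψ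

theorem IsWOTClusterPt.eq_of_tendsto_inner_apply_self {T : ℝ → (H →L[ℂ] H)} {l : Filter ℝ}
    {c : ℂ} (hc : IsWOTClusterPt (c • (1 : H →L[ℂ] H)) l T) {Ψ₁ Ψ₂ : H} (hΨ₁ : ‖Ψ₁‖ = 1)
    (hΨ₂ : ‖Ψ₂‖ = 1) {a b : ℂ} (ha : Tendsto (fun t => ⟪Ψ₁, T t Ψ₁⟫) l (𝓝 a))
    (hb : Tendsto (fun t => ⟪Ψ₂, T t Ψ₂⟫) l (𝓝 b)) : a = b := by
  rw [← hc.inner_apply_eq_of_tendsto ha, ← hc.inner_apply_eq_of_tendsto hb,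
    inner_smul_one_apply_self hΨ₁, inner_smul_one_apply_self hΨ₂]

end WeakOperatorTopology

section DoubleCommutant

open Module.End

variable {K : Type*} [NormedAddCommGroup K] [InnerProductSpace ℂ K] [CompleteSpace K]

theorem Submodule.commute_starProjection_of_mem_invtSubmodule {V : Submodule ℂ K}
    [V.HasOrthogonalProjection] {T : K →L[ℂ] K} (hT : V ∈ invtSubmodule T.toLinearMap)
    (hT' : V ∈ invtSubmodule T.adjoint.toLinearMap) : Commute V.starProjection T := by
  rw [ContinuousLinearMap.IsIdempotentElem.commute_iff V.isIdempotentElem_starProjection,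
    V.range_starProjection, V.ker_starProjection]
  exact ⟨hT, ContinuousLinearMap.orthogonal_mem_invtSubmodule hT'⟩

theorem StarSubalgebra.apply_mem_closure_of_mem_centralizer_centralizer
    (A : StarSubalgebra ℂ (K →L[ℂ] K)) (ξ : K) {T : K →L[ℂ] K}
    (hT : T ∈ Set.centralizer (Set.centralizer (A : Set (K →L[ℂ] K)))) :
    T ξ ∈ closure ((fun a : K →L[ℂ] K => a ξ) '' A) := by
  let V : Submodule ℂ K := (A.toSubalgebra.toSubmodule.map
    (ContinuousLinearMap.apply ℂ K ξ : (K →L[ℂ] K) →ₗ[ℂ] K)).topologicalClosure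
  have hV : (V : Set K) = closure ((fun a : K →L[ℂ] K => a ξ) '' A) := rfl
  have hinvt : ∀ a ∈ A, V ∈ invtSubmodule a.toLinearMap := fun a ha => by
    rw [mem_invtSubmodule_iff_mapsTo, ContinuousLinearMap.coe_coe, hV]
    refine Set.MapsTo.closure ?_ a.continuous
    rintro _ ⟨b, hb, rfl⟩
    exact ⟨a * b, mul_mem ha hb, rfl⟩
  -- `V` is invariant under the star-closed `A`, so its projection lies in `A'`.
  have hP : V.starProjection ∈ Set.centralizer (A : Set (K →L[ℂ] K)) := fun a ha =>
    (V.commute_starProjection_of_mem_invtSubmodule (hinvt a ha)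
      (hinvt _ (by simpa [ContinuousLinearMap.star_eq_adjoint] using star_mem ha))).symm.eq
  have hξ : ξ ∈ V := by
    rw [← SetLike.mem_coe, hV]
    exact subset_closure ⟨1, one_mem A, rfl⟩
  have hTξ : T ξ = V.starProjection (T ξ) := by
    conv_lhs => rw [← V.starProjection_eq_self_iff.mpr hξ]
    exact congr($(hT _ hP) ξ).symm
  rw [← hV, hTξ]
  exact V.starProjection_apply_mem _

variable {H : Type*} [NormedAddCommGroup H] [InnerProductSpace ℂ H] [CompleteSpace H]
variable {ι : Type*} [Fintype ι]

variable (H ι) in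
noncomputable def ampliation :
    (H →L[ℂ] H) →⋆ₐ[ℂ] (PiLp 2 (fun _ : ι => H) →L[ℂ] PiLp 2 (fun _ : ι => H)) where
  toFun X := (PiLp.continuousLinearEquiv 2 ℂ _).symm.toContinuousLinearMap ∘L
    ContinuousLinearMap.pi (fun i => X ∘L ContinuousLinearMap.proj i) ∘L
    (PiLp.continuousLinearEquiv 2 ℂ _).toContinuousLinearMap
  map_one' := rfl
  map_mul' _ _ := rfl
  map_zero' := rfl
  map_add' _ _ := rfl
  commutes' _ := rfl
  map_star' X := by
    simp only [ContinuousLinearMap.star_eq_adjoint]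
    refine (ContinuousLinearMap.eq_adjoint_iff _ _).mpr fun u v => ?_
    simp only [PiLp.inner_apply]
    exact Finset.sum_congr rfl fun i _ => X.adjoint_inner_left (v i) (u i)

@[simp]
theorem ampliation_apply (X : H →L[ℂ] H) (u : PiLp 2 (fun _ : ι => H)) (i : ι) :
    ampliation H ι X u i = X (u i) := rfl

theorem ampliation_mem_centralizer_centralizer {S : Set (H →L[ℂ] H)} {X : H →L[ℂ] H}
    (hX : X ∈ Set.centralizer (Set.centralizer S)) :
    ampliation H ι X ∈ Set.centralizer (Set.centralizer (ampliation H ι '' S)) := by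
  classical
  intro T hT
  -- The block entries `entry i j` of `T` commute with `S`, hence with `X`.
  let single (j : ι) : H →L[ℂ] PiLp 2 (fun _ : ι => H) :=
    (PiLp.continuousLinearEquiv 2 ℂ _).symm.toContinuousLinearMap ∘L
      ContinuousLinearMap.single ℂ (fun _ => H) j
  let entry (i j : ι) : H →L[ℂ] H := PiLp.proj 2 (fun _ : ι => H) i ∘L T ∘L single j
  have ampliation_single : ∀ Y j x, ampliation H ι Y (single j x) = single j (Y x) := by
    intro Y j x
    ext i
    simp [single, apply_ite Y]
  have entry_mem : ∀ i j, entry i j ∈ Set.centralizer S := fun i j Y hY => by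
    ext x
    have := congr($(hT _ ⟨Y, hY, rfl⟩) (single j x) i)
    simpa [entry, ampliation_single] using this
  have apply_eq_sum : ∀ u i, T u i = ∑ j, entry i j (u j) := by
    intro u i
    have hu : u = ∑ j, single j (u j) := by
      ext k
      simp [single]
    conv_lhs => rw [hu]
    simp [entry]
  ext u i
  change T (ampliation H ι X u) i = X (T u i)
  simp only [apply_eq_sum, ampliation_apply, map_sum]
  exact Finset.sum_congr rfl fun j _ => congr($(hX _ (entry_mem i j)) (u j))

theorem mem_closure_image_of_mem_centralizer_centralizer (N : StarSubalgebra ℂ (H →L[ℂ] H))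
    (ξ : ι → H) {X : H →L[ℂ] H} (hX : X ∈ Set.centralizer (Set.centralizer (N : Set _))) :
    (fun i => X (ξ i)) ∈ closure ((fun Y : H →L[ℂ] H => fun i => Y (ξ i)) '' N) := by
  have hamp := (N.map (ampliation H ι)).apply_mem_closure_of_mem_centralizer_centralizer
    (WithLp.toLp 2 ξ) (by simpa using ampliation_mem_centralizer_centralizer hX)
  refine map_mem_closure (PiLp.continuous_ofLp 2 _) hamp ?_
  rintro _ ⟨_, ⟨Y, hY, rfl⟩, rfl⟩
  exact ⟨Y, hY, rfl⟩

theorem inner_apply_self_eq_of_mem_centralizer_centralizer (N : StarSubalgebra ℂ (H →L[ℂ] H))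
    {ξ η : H} (h : ∀ Y ∈ N, ⟪ξ, Y ξ⟫ = ⟪η, Y η⟫) {X : H →L[ℂ] H}
    (hX : X ∈ Set.centralizer (Set.centralizer (N : Set _))) : ⟪ξ, X ξ⟫ = ⟪η, X η⟫ := by
  have hclosed : IsClosed {u : Fin 2 → H | ⟪ξ, u 0⟫ = ⟪η, u 1⟫} :=
    isClosed_eq (by fun_prop) (by fun_prop)
  refine hclosed.closure_subset_iff.mpr ?_
    (mem_closure_image_of_mem_centralizer_centralizer N ![ξ, η] hX)
  rintro _ ⟨Y, hY, rfl⟩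
  exact h Y hY

end DoubleCommutant

theorem stmt1_general
    {H : Type*} [NormedAddCommGroup H] [InnerProductSpace ℂ H] [CompleteSpace H]
    (N M : StarSubalgebra ℂ (H →L[ℂ] H))
    (hNM : N ≤ M)
    (hM : (M : Set (H →L[ℂ] H)) = Set.centralizer (Set.centralizer (N : Set (H →L[ℂ] H))))
    (Ψφ Ψψ : H) (hΨφ : ‖Ψφ‖ = 1) (hΨψ : ‖Ψψ‖ = 1)
    (γφ γψ : ℝ → (M ≃⋆ₐ[ℂ] M))
    (hcomm : ∀ s t : ℝ, ∀ X : M, γφ t (γψ s X) = γψ s (γφ t X))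
    -- invariance of the vector states
    (hφinv : ∀ t : ℝ, ∀ X : M,
      ⟪Ψφ, (γφ t X : H →L[ℂ] H) Ψφ⟫ = ⟪Ψφ, (X : H →L[ℂ] H) Ψφ⟫)
    (hψinv : ∀ t : ℝ, ∀ X : M,
      ⟪Ψψ, (γψ t X : H →L[ℂ] H) Ψψ⟫ = ⟪Ψψ, (X : H →L[ℂ] H) Ψψ⟫)
    -- cluster point hypotheses on elements of N
    (hφtop : ∀ X : M, (X : H →L[ℂ] H) ∈ N →
      (∃ S, IsWOTClusterPt S atTop fun t => (γφ t X : H →L[ℂ] H)) ∧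
      ∀ S, (IsWOTClusterPt S atTop fun t => (γφ t X : H →L[ℂ] H)) →
        ∃ c : ℂ, S = c • (1 : H →L[ℂ] H))
    (hφbot : ∀ X : M, (X : H →L[ℂ] H) ∈ N →
      (∃ S, IsWOTClusterPt S atBot fun t => (γφ t X : H →L[ℂ] H)) ∧
      ∀ S, (IsWOTClusterPt S atBot fun t => (γφ t X : H →L[ℂ] H)) →
        ∃ c : ℂ, S = c • (1 : H →L[ℂ] H))
    (hψtop : ∀ X : M, (X : H →L[ℂ] H) ∈ N →
      (∃ S, IsWOTClusterPt S atTop fun t => (γψ t X : H →L[ℂ] H)) ∧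
      ∀ S, (IsWOTClusterPt S atTop fun t => (γψ t X : H →L[ℂ] H)) →
        ∃ c : ℂ, S = c • (1 : H →L[ℂ] H))
    (hψbot : ∀ X : M, (X : H →L[ℂ] H) ∈ N →
      (∃ S, IsWOTClusterPt S atBot fun t => (γψ t X : H →L[ℂ] H)) ∧
      ∀ S, (IsWOTClusterPt S atBot fun t => (γψ t X : H →L[ℂ] H)) →
        ∃ c : ℂ, S = c • (1 : H →L[ℂ] H))
    (hcombined : ∀ X : M, (X : H →L[ℂ] H) ∈ N →
      (∃ S, IsWOTClusterPt S atTop fun t => (γψ (-t) (γφ t X) : H →L[ℂ] H)) ∧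
      ∀ S, (IsWOTClusterPt S atTop fun t => (γψ (-t) (γφ t X) : H →L[ℂ] H)) →
        ∃ c : ℂ, S = c • (1 : H →L[ℂ] H)) :
    (∀ X : M, (X : H →L[ℂ] H) ∈ N →
      WOTTendsto (fun t => (γφ t X : H →L[ℂ] H)) atTop
        (⟪Ψφ, (X : H →L[ℂ] H) Ψφ⟫ • (1 : H →L[ℂ] H)) ∧
      WOTTendsto (fun t => (γφ t X : H →L[ℂ] H)) atBot
        (⟪Ψφ, (X : H →L[ℂ] H) Ψφ⟫ • (1 : H →L[ℂ] H)) ∧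
      WOTTendsto (fun t => (γψ t X : H →L[ℂ] H)) atTop
        (⟪Ψψ, (X : H →L[ℂ] H) Ψψ⟫ • (1 : H →L[ℂ] H)) ∧
      WOTTendsto (fun t => (γψ t X : H →L[ℂ] H)) atBot
        (⟪Ψψ, (X : H →L[ℂ] H) Ψψ⟫ • (1 : H →L[ℂ] H))) ∧
    (∀ X : M, ⟪Ψφ, (X : H →L[ℂ] H) Ψφ⟫ = ⟪Ψψ, (X : H →L[ℂ] H) Ψψ⟫) := by
  have hMc : IsClosed (M : Set (H →L[ℂ] H)) := hM ▸ Set.isClosed_centralizer _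
  have hlim (γ : ℝ → (M ≃⋆ₐ[ℂ] M)) {Ψ : H} (hΨ : ‖Ψ‖ = 1)
      (hinv : ∀ t X, ⟪Ψ, (γ t X : H →L[ℂ] H) Ψ⟫ = ⟪Ψ, (X : H →L[ℂ] H) Ψ⟫) (X : M) {l : Filter ℝ}
      (hX : ∀ S, IsWOTClusterPt S l (fun t => (γ t X : H →L[ℂ] H)) → ∃ c : ℂ, S = c • 1) :
      WOTTendsto (fun t => (γ t X : H →L[ℂ] H)) l (⟪Ψ, (X : H →L[ℂ] H) Ψ⟫ • 1) :=
    -- a closed `M` is a C⋆-algebra, so its automorphisms are isometric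
    have := hMc
    wotTendsto_smul_one_of_inner_apply_self_eq (fun t => (StarAlgEquiv.norm_map (γ t) X).le) hΨ
      (hinv · X) hX
  refine ⟨fun X hX => ⟨hlim γφ hΨφ hφinv X (hφtop X hX).2, hlim γφ hΨφ hφinv X (hφbot X hX).2,
    hlim γψ hΨψ hψinv X (hψtop X hX).2, hlim γψ hΨψ hψinv X (hψbot X hX).2⟩, fun X => ?_⟩
  have hN : ∀ Y ∈ N, ⟪Ψφ, Y Ψφ⟫ = ⟪Ψψ, Y Ψψ⟫ := by
    intro Y hY
    set X : M := ⟨Y, hNM hY⟩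
    obtain ⟨S, hS⟩ := (hcombined X hY).1
    obtain ⟨c, rfl⟩ := (hcombined X hY).2 S hS
    refine hS.eq_of_tendsto_inner_apply_self hΨψ hΨφ ?_ ?_
    · simpa only [hψinv] using (hlim γφ hΨφ hφinv X (hφtop X hY).2).tendsto_inner_apply_self hΨψ
    · simpa only [← hcomm, hφinv, Function.comp_def] using
        ((hlim γψ hΨψ hψinv X (hψbot X hY).2).tendsto_inner_apply_self hΨφ).comp
          tendsto_neg_atTop_atBot
  exact inner_apply_self_eq_of_mem_centralizer_centralizer N hN (hM ▸ X.2)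

/-- Two vector states that are invariant under commuting one-parameter
automorphism groups of a von Neumann algebra `M = N''` agree, provided the relevant nets have
only scalar WOT cluster points. -/
theorem stmt1
    {H : Type*} [NormedAddCommGroup H] [InnerProductSpace ℂ H] [CompleteSpace H]
    (N M : StarSubalgebra ℂ (H →L[ℂ] H))
    (hNM : N ≤ M)
    (hM : (M : Set (H →L[ℂ] H)) = Set.centralizer (Set.centralizer (N : Set (H →L[ℂ] H))))
    (Ψφ Ψψ : H) (hΨφ : ‖Ψφ‖ = 1) (hΨψ : ‖Ψψ‖ = 1)
    (γφ γψ : ℝ → (M ≃⋆ₐ[ℂ] M))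
    (hγφ0 : ∀ X : M, γφ 0 X = X)
    (hγφadd : ∀ s t : ℝ, ∀ X : M, γφ (s + t) X = γφ s (γφ t X))
    (hγψ0 : ∀ X : M, γψ 0 X = X)
    (hγψadd : ∀ s t : ℝ, ∀ X : M, γψ (s + t) X = γψ s (γψ t X))
    (hcomm : ∀ s t : ℝ, ∀ X : M, γφ t (γψ s X) = γψ s (γφ t X))
    -- invariance of the vector states
    (hφinv : ∀ t : ℝ, ∀ X : M,
      ⟪Ψφ, (γφ t X : H →L[ℂ] H) Ψφ⟫ = ⟪Ψφ, (X : H →L[ℂ] H) Ψφ⟫)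
    (hψinv : ∀ t : ℝ, ∀ X : M,
      ⟪Ψψ, (γψ t X : H →L[ℂ] H) Ψψ⟫ = ⟪Ψψ, (X : H →L[ℂ] H) Ψψ⟫)
    -- cluster point hypotheses on elements of N
    (hφtop : ∀ X : M, (X : H →L[ℂ] H) ∈ N →
      (∃ S, IsWOTClusterPt S atTop fun t => (γφ t X : H →L[ℂ] H)) ∧
      ∀ S, (IsWOTClusterPt S atTop fun t => (γφ t X : H →L[ℂ] H)) →
        ∃ c : ℂ, S = c • (1 : H →L[ℂ] H))
    (hφbot : ∀ X : M, (X : H →L[ℂ] H) ∈ N →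
      (∃ S, IsWOTClusterPt S atBot fun t => (γφ t X : H →L[ℂ] H)) ∧
      ∀ S, (IsWOTClusterPt S atBot fun t => (γφ t X : H →L[ℂ] H)) →
        ∃ c : ℂ, S = c • (1 : H →L[ℂ] H))
    (hψtop : ∀ X : M, (X : H →L[ℂ] H) ∈ N →
      (∃ S, IsWOTClusterPt S atTop fun t => (γψ t X : H →L[ℂ] H)) ∧
      ∀ S, (IsWOTClusterPt S atTop fun t => (γψ t X : H →L[ℂ] H)) →
        ∃ c : ℂ, S = c • (1 : H →L[ℂ] H))
    (hψbot : ∀ X : M, (X : H →L[ℂ] H) ∈ N →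
      (∃ S, IsWOTClusterPt S atBot fun t => (γψ t X : H →L[ℂ] H)) ∧
      ∀ S, (IsWOTClusterPt S atBot fun t => (γψ t X : H →L[ℂ] H)) →
        ∃ c : ℂ, S = c • (1 : H →L[ℂ] H))
    (hcombined : ∀ X : M, (X : H →L[ℂ] H) ∈ N →
      (∃ S, IsWOTClusterPt S atTop fun t => (γψ (-t) (γφ t X) : H →L[ℂ] H)) ∧
      ∀ S, (IsWOTClusterPt S atTop fun t => (γψ (-t) (γφ t X) : H →L[ℂ] H)) →
        ∃ c : ℂ, S = c • (1 : H →L[ℂ] H)) :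
    (∀ X : M, (X : H →L[ℂ] H) ∈ N →
      WOTTendsto (fun t => (γφ t X : H →L[ℂ] H)) atTop
        (⟪Ψφ, (X : H →L[ℂ] H) Ψφ⟫ • (1 : H →L[ℂ] H)) ∧
      WOTTendsto (fun t => (γφ t X : H →L[ℂ] H)) atBot
        (⟪Ψφ, (X : H →L[ℂ] H) Ψφ⟫ • (1 : H →L[ℂ] H)) ∧
      WOTTendsto (fun t => (γψ t X : H →L[ℂ] H)) atTop
        (⟪Ψψ, (X : H →L[ℂ] H) Ψψ⟫ • (1 : H →L[ℂ] H)) ∧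
      WOTTendsto (fun t => (γψ t X : H →L[ℂ] H)) atBot
        (⟪Ψψ, (X : H →L[ℂ] H) Ψψ⟫ • (1 : H →L[ℂ] H))) ∧
    (∀ X : M, ⟪Ψφ, (X : H →L[ℂ] H) Ψφ⟫ = ⟪Ψψ, (X : H →L[ℂ] H) Ψψ⟫) :=
  stmt1_general N M hNM hM Ψφ Ψψ hΨφ hΨψ γφ γψ hcomm hφinv hψinv hφtop hφbot hψtop hψbot hcombined
end

section
/- Let A be a unital C*-algebra, α a one-parameter group of *-automorphisms of A, and ω a state on A with GNS data (π, H, Ω), invariant under α. (i) If Ω is separating for M = π(A)'' and (A, α, ω) is mixing, then (A, α, ω) is weakly asymptotically abelian: for all a, b ∈ A, the commutator [π(α_t(a)), π(b)] converges to 0 in the weak operator topology as t → +∞. (ii) Conversely, if ω is primary (M is a factor) and (A, α, ω) is weakly asymptotically abelian, then (A, α, ω) is mixing. -/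
/-!
(i) Mixing says that `π (α t a) Ω → ω a • Ω` weakly. A vector separating for `M = π(A)''` is
cyclic for `M'`, and `π (α t a)` commutes with `M'`, so testing against the dense set `M' Ω`
upgrades this to `π (α t a) → ω a • 1` in the weak operator topology, and commutators with `π b`
tend to `ω a • π b - π b * ω a • 1 = 0`.

(ii) The family `π (α t a)` is bounded, so along every ultrafilter finer than `atTop` it has a
weak-operator limit `X`. Weak asymptotic abelianness puts `X` in `M'`, and `M''` is weakly closed,
so `X` lies in the centre of `M`, hence is a scalar, which invariance of `ω` identifies as `ω a`.
Then `ω (b * α t a) = ⟪π (star b) Ω, π (α t a) Ω⟫ → ω a * ω b` along every such ultrafilter.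
-/

open Filter
open scoped ComplexOrder ComplexInnerProductSpace

section

open ContinuousLinearMap

variable {H : Type*} [NormedAddCommGroup H] [InnerProductSpace ℂ H]

theorem tendsto_inner_of_topologicalClosure_span_eq_top {ι : Type*} {l : Filter ι} {s : Set H}
    (hs : (Submodule.span ℂ s).topologicalClosure = ⊤) {y : ι → H} {C : ℝ}
    (hy : ∀ i, ‖y i‖ ≤ C) {z : H} (h : ∀ v ∈ s, Tendsto (fun i => ⟪v, y i⟫) l (nhds ⟪v, z⟫))
    (v : H) : Tendsto (fun i => ⟪v, y i⟫) l (nhds ⟪v, z⟫) := by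
  have hlip : ∀ i, LipschitzWith C.toNNReal fun v : H => ⟪v, y i⟫ := fun i =>
    LipschitzWith.of_dist_le_mul fun v v' => by
      rw [dist_eq_norm, dist_eq_norm, ← inner_sub_left, mul_comm]
      exact (norm_inner_le_norm _ _).trans
        (by gcongr; exact (hy i).trans (Real.le_coe_toNNReal C))
  have hclosed : IsClosed {v : H | Tendsto (fun i => ⟪v, y i⟫) l (nhds ⟪v, z⟫)} :=
    (LipschitzWith.uniformEquicontinuous _ _ hlip).equicontinuous.isClosed_setOfPred_tendsto
      (continuous_id.inner continuous_const)
  have hspan : ∀ v ∈ Submodule.span ℂ s, Tendsto (fun i => ⟪v, y i⟫) l (nhds ⟪v, z⟫) := by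
    intro v hv
    induction hv using Submodule.span_induction with
    | mem v hv => exact h v hv
    | zero => simpa only [inner_zero_left] using tendsto_const_nhds
    | add v v' _ _ hv hv' => simpa only [inner_add_left] using hv.add hv'
    | smul c v _ hv => simpa only [inner_smul_left] using hv.const_mul _
  have hv : v ∈ closure (Submodule.span ℂ s : Set H) := by
    rw [← Submodule.topologicalClosure_coe, hs]; trivial
  exact hclosed.closure_subset_iff.mpr hspan hv

namespace WOTTendsto

variable {T S : ℝ → H →L[ℂ] H} {l : Filter ℝ} {X Y : H →L[ℂ] H}

theorem mono_left (hT : WOTTendsto T l X) {l' : Filter ℝ} (hl : l' ≤ l) : WOTTendsto T l' X :=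
  fun v w => (hT v w).mono_left hl

theorem sub (hT : WOTTendsto T l X) (hS : WOTTendsto S l Y) :
    WOTTendsto (fun t => T t - S t) l (X - Y) := fun v w => by
  simpa only [sub_apply, inner_sub_right] using (hT v w).sub (hS v w)

theorem mul_const (hT : WOTTendsto T l X) (B : H →L[ℂ] H) :
    WOTTendsto (fun t => T t * B) l (X * B) := fun v w => hT v (B w)

theorem const_mul [CompleteSpace H] (hT : WOTTendsto T l X) (B : H →L[ℂ] H) :
    WOTTendsto (fun t => B * T t) l (B * X) := fun v w => by
  simpa only [mul_apply_eq_comp, adjoint_inner_left] using hT (adjoint B v) w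

theorem unique [l.NeBot] (hX : WOTTendsto T l X) (hY : WOTTendsto T l Y) : X = Y :=
  ext fun w => ext_inner_left ℂ fun v => tendsto_nhds_unique (hX v w) (hY v w)

theorem mul_comm_of_commutator [CompleteSpace H] [l.NeBot] (hT : WOTTendsto T l X)
    {B : H →L[ℂ] H} (hB : WOTTendsto (fun t => T t * B - B * T t) l 0) : X * B = B * X :=
  sub_eq_zero.mp (((hT.mul_const B).sub (hT.const_mul B)).unique hB)

end WOTTendsto

variable [CompleteSpace H]

theorem exists_wotTendsto_of_norm_le (U : Ultrafilter ℝ) {T : ℝ → H →L[ℂ] H} {C : ℝ}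
    (hT : ∀ t, ‖T t‖ ≤ C) : ∃ X, WOTTendsto T U X := by
  have hle : ∀ t v w, ‖⟪v, T t w⟫‖ ≤ C * ‖v‖ * ‖w‖ := fun t v w =>
    calc ‖⟪v, T t w⟫‖ ≤ ‖v‖ * ‖T t w‖ := norm_inner_le_norm _ _
      _ ≤ ‖v‖ * (C * ‖w‖) := by gcongr; exact (T t).le_of_opNorm_le (hT t) w
      _ = C * ‖v‖ * ‖w‖ := by ring
  have hlim : ∀ v w, ∃ z ∈ Metric.closedBall (0 : ℂ) (C * ‖v‖ * ‖w‖),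
      Tendsto (fun t => ⟪v, T t w⟫) U (nhds z) := fun v w =>
    (isCompact_closedBall _ _).ultrafilter_le_nhds (U.map _)
      (le_principal_iff.mpr <| mem_map.mpr <|
        univ_mem' fun t => mem_closedBall_zero_iff.mpr (hle t v w))
  choose φ hφC hφ using hlim
  let B : H →ₗ⋆[ℂ] H →ₗ[ℂ] ℂ := LinearMap.mk₂'ₛₗ (starRingEnd ℂ) (RingHom.id ℂ) φ
    (fun v v' w => tendsto_nhds_unique (hφ _ _)
      (by simpa only [inner_add_left] using (hφ v w).add (hφ v' w)))
    (fun c v w => tendsto_nhds_unique (hφ _ _)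
      (by simpa only [inner_smul_left, smul_eq_mul] using (hφ v w).const_mul (starRingEnd ℂ c)))
    (fun v w w' => tendsto_nhds_unique (hφ _ _)
      (by simpa only [map_add, inner_add_right] using (hφ v w).add (hφ v w')))
    (fun c v w => tendsto_nhds_unique (hφ _ _)
      (by simpa only [map_smul, inner_smul_right, RingHom.id_apply, smul_eq_mul]
        using (hφ v w).const_mul c))
  let X := InnerProductSpace.continuousLinearMapOfBilin
    (B.mkContinuous₂ C fun v w => mem_closedBall_zero_iff.mp (hφC v w))
  -- `⟪X v, w⟫ = φ v w`, so `X` is the limit of the adjoints of `T t`.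
  refine ⟨adjoint X, fun v w => ?_⟩
  rw [adjoint_inner_right, InnerProductSpace.continuousLinearMapOfBilin_apply]
  exact hφ v w

theorem commute_starProjection_of_mapsTo (K : Submodule ℂ H) [K.HasOrthogonalProjection]
    {T : H →L[ℂ] H} (hT : ∀ x ∈ K, T x ∈ K) (hT' : ∀ x ∈ K, adjoint T x ∈ K) :
    Commute T K.starProjection := by
  set P := K.starProjection
  have hPSP : ∀ S : H →L[ℂ] H, (∀ x ∈ K, S x ∈ K) → P * S * P = S * P := fun S hS =>
    ext fun x => K.starProjection_eq_self_iff.mpr (hS _ (K.starProjection_apply_mem x))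
  have hPP : adjoint P = P := (isSelfAdjoint_starProjection K).adjoint_eq
  have hstar := congrArg star (hPSP _ hT')
  simp only [star_mul, star_eq_adjoint, adjoint_adjoint, hPP] at hstar
  calc T * P = P * T * P := (hPSP T hT).symm
    _ = P * T := by rw [mul_assoc, hstar]

theorem topologicalClosure_span_centralizer_apply_eq_top {R : Set (H →L[ℂ] H)}
    (hR : ∀ x ∈ R, star x ∈ R) {Ω : H}
    (hsep : ∀ X ∈ R.centralizer.centralizer, X Ω = 0 → X = 0) :
    (Submodule.span ℂ ((fun S : H →L[ℂ] H => S Ω) '' R.centralizer)).topologicalClosure = ⊤ := by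
  set D := Submodule.span ℂ ((fun S : H →L[ℂ] H => S Ω) '' R.centralizer)
  set K := D.topologicalClosure
  have hK : ∀ S ∈ R.centralizer, ∀ x ∈ K, S x ∈ K := by
    intro S hS
    refine D.topologicalClosure_minimal (t := K.comap (S : H →ₗ[ℂ] H)) ?_
      (D.isClosed_topologicalClosure.preimage S.continuous)
    rw [Submodule.span_le]
    rintro _ ⟨S', hS', rfl⟩
    exact Submodule.le_topologicalClosure _
      (Submodule.subset_span ⟨S * S', Set.mul_mem_centralizer hS hS', rfl⟩)
  have hP : 1 - K.starProjection ∈ R.centralizer.centralizer := fun S hS => by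
    have hSP := commute_starProjection_of_mapsTo K (hK S hS)
      (by rw [← star_eq_adjoint]; exact hK _ (Set.star_mem_centralizer' hR hS))
    rw [mul_sub, sub_mul, mul_one, one_mul, hSP.eq]
  have hΩ : (1 - K.starProjection) Ω = 0 := by
    rw [sub_apply, one_apply_eq_self, sub_eq_zero, eq_comm, K.starProjection_eq_self_iff]
    exact Submodule.le_topologicalClosure _
      (Submodule.subset_span ⟨1, Set.one_mem_centralizer, rfl⟩)
  have hP1 : K.starProjection = 1 := (sub_eq_zero.mp (hsep _ hP hΩ)).symm
  exact Submodule.eq_top_iff'.mpr fun x =>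
    K.starProjection_eq_self_iff.mp (by rw [hP1, one_apply_eq_self])

theorem wotTendsto_smul_one_of_mem_centralizer {R : Set (H →L[ℂ] H)} (hR : ∀ x ∈ R, star x ∈ R)
    {Ω : H} (hcyc : (Submodule.span ℂ ((fun S : H →L[ℂ] H => S Ω) '' R)).topologicalClosure = ⊤)
    {T : ℝ → H →L[ℂ] H} {l : Filter ℝ} {C : ℝ} (hT : ∀ t, ‖T t‖ ≤ C)
    (hTR : ∀ t, T t ∈ R.centralizer) {c : ℂ}
    (hΩ : ∀ u, Tendsto (fun t => ⟪Ω, T t u⟫) l (nhds (c * ⟪Ω, u⟫))) :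
    WOTTendsto T l (c • 1) := by
  intro v w
  rw [smul_apply, one_apply_eq_self]
  refine tendsto_inner_of_topologicalClosure_span_eq_top hcyc
    (fun t => (T t).le_of_opNorm_le (hT t) w) ?_ v
  rintro _ ⟨S, hS, rfl⟩
  have hcomm : ∀ t, adjoint S (T t w) = T t (adjoint S w) := fun t => by
    rw [← star_eq_adjoint]
    exact congrArg (· w) (hTR t _ (hR S hS))
  simp only [← adjoint_inner_right, hcomm, inner_smul_right]
  exact hΩ _

theorem exists_wotTendsto_smul_one_of_centralizer_inter_eq {R : Set (H →L[ℂ] H)}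
    (hfac : R.centralizer.centralizer ∩ R.centralizer.centralizer.centralizer =
      Set.range fun c : ℂ => c • (1 : H →L[ℂ] H))
    {T : ℝ → H →L[ℂ] H} {C : ℝ} (hT : ∀ t, ‖T t‖ ≤ C) (hTR : ∀ t, T t ∈ R)
    (hcomm : ∀ g ∈ R, WOTTendsto (fun t => T t * g - g * T t) atTop 0)
    (U : Ultrafilter ℝ) (hU : (U : Filter ℝ) ≤ atTop) : ∃ c : ℂ, WOTTendsto T U (c • 1) := by
  obtain ⟨X, hX⟩ := exists_wotTendsto_of_norm_le U hT
  have hX' : X ∈ R.centralizer := fun g hg =>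
    (hX.mul_comm_of_commutator ((hcomm g hg).mono_left hU)).symm
  have hX'' : X ∈ R.centralizer.centralizer := fun g hg => by
    have hzero : (fun t => T t * g - g * T t) = fun _ => 0 :=
      funext fun t => sub_eq_zero.mpr (hg _ (hTR t))
    exact (hX.mul_comm_of_commutator (hzero ▸ fun _ _ => tendsto_const_nhds)).symm
  obtain ⟨c, rfl⟩ : X ∈ Set.range fun c : ℂ => c • (1 : H →L[ℂ] H) :=
    hfac ▸ ⟨hX'', Set.subset_centralizer_centralizer hX'⟩
  exact ⟨c, hX⟩

variable {A : Type*}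

theorem inner_map_apply_left [Ring A] [StarRing A] [Algebra ℂ A]
    (π : A →⋆ₐ[ℂ] (H →L[ℂ] H)) (a : A) (x y : H) : ⟪π a x, y⟫ = ⟪x, π (star a) y⟫ := by
  rw [map_star, star_eq_adjoint, adjoint_inner_right]

theorem tendsto_mul_of_wotTendsto_smul_one [Ring A] [StarRing A] [Algebra ℂ A]
    {π : A →⋆ₐ[ℂ] (H →L[ℂ] H)} {Ω : H} (hΩ : ‖Ω‖ = 1) {ω : A →ₗ[ℂ] ℂ}
    (hrep : ∀ a, ω a = ⟪Ω, π a Ω⟫) {α : ℝ → A ≃⋆ₐ[ℂ] A} (hinv : ∀ t a, ω (α t a) = ω a)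
    {l : Filter ℝ} [l.NeBot] {a : A} {c : ℂ} (hc : WOTTendsto (fun t => π (α t a)) l (c • 1))
    (b : A) : Tendsto (fun t => ω (b * α t a)) l (nhds (ω a * ω b)) := by
  have hΩΩ : ⟪Ω, Ω⟫ = 1 := by rw [inner_self_eq_norm_sq_to_K, hΩ]; norm_num
  have hca : c = ω a := by
    have h := hc Ω Ω
    simp only [← hrep, hinv, smul_apply, one_apply_eq_self, inner_smul_right, hΩΩ, mul_one] at h
    exact tendsto_nhds_unique tendsto_const_nhds h |>.symm
  have h := hc (π (star b) Ω) Ω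
  simp only [inner_map_apply_left, star_star, smul_apply, one_apply_eq_self, inner_smul_right,
    ← mul_apply_eq_comp, ← map_mul, ← hrep, hca] at h
  exact h

theorem norm_map_apply_le [CStarAlgebra A] (π : A →⋆ₐ[ℂ] (H →L[ℂ] H)) (α : ℝ → A ≃⋆ₐ[ℂ] A)
    (a : A) (t : ℝ) : ‖π (α t a)‖ ≤ ‖a‖ :=
  (NonUnitalStarAlgHom.norm_apply_le π _).trans_eq (StarAlgEquiv.norm_map (α t) a)

theorem tendsto_inner_map_apply_of_mixing [CStarAlgebra A] {π : A →⋆ₐ[ℂ] (H →L[ℂ] H)} {Ω : H}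
    {ω : A →ₗ[ℂ] ℂ} (hrep : ∀ a, ω a = ⟪Ω, π a Ω⟫)
    (hcyc : (Submodule.span ℂ (Set.range fun b : A => π b Ω)).topologicalClosure = ⊤)
    {α : ℝ → A ≃⋆ₐ[ℂ] A}
    (hmix : ∀ a b : A, Tendsto (fun t => ω (b * α t a)) atTop (nhds (ω a * ω b))) (a : A)
    (u : H) : Tendsto (fun t => ⟪Ω, π (α t a) u⟫) atTop (nhds (ω a * ⟪Ω, u⟫)) := by
  have hω_star : ∀ x, ω (star x) = starRingEnd ℂ (ω x) := fun x => by
    rw [hrep, hrep, ← inner_map_apply_left, inner_conj_symm]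
  have hinner : ∀ x y : A, ⟪π x Ω, π y Ω⟫ = ω (star x * y) := fun x y => by
    rw [inner_map_apply_left, hrep, map_mul, mul_apply_eq_comp]
  -- Mixing for `star a` gives `π (α t (star a)) Ω → ω (star a) • Ω` weakly; the claim is the
  -- complex conjugate of this.
  have hweak := tendsto_inner_of_topologicalClosure_span_eq_top hcyc
    (fun t => (π (α t (star a))).le_of_opNorm_le (norm_map_apply_le π α (star a) t) Ω)
    (z := ω (star a) • Ω) (by
      rintro _ ⟨x, rfl⟩
      simp only [inner_smul_right, hinner]
      rw [inner_map_apply_left, ← hrep]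
      exact hmix (star a) (star x)) u
  simpa only [Function.comp_def, inner_conj_symm, inner_smul_right, map_mul, hω_star,
    Complex.conj_conj, inner_map_apply_left, ← map_star, star_star]
    using (Complex.continuous_conj.tendsto _).comp hweak

end

theorem stmt6_general
    {A : Type*} [NormedRing A] [StarRing A] [CStarRing A] [CompleteSpace A]
    [NormedAlgebra ℂ A] [StarModule ℂ A]
    {H : Type*} [NormedAddCommGroup H] [InnerProductSpace ℂ H] [CompleteSpace H]
    -- one-parameter group of *-automorphisms
    (α : ℝ → (A ≃⋆ₐ[ℂ] A))
    -- state
    (ω : A →ₗ[ℂ] ℂ)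
    -- GNS data
    (π : A →⋆ₐ[ℂ] (H →L[ℂ] H)) (Ω : H) (hΩnorm : ‖Ω‖ = 1)
    (hrep : ∀ a : A, ω a = ⟪Ω, π a Ω⟫)
    (hcyc : (Submodule.span ℂ (Set.range fun b : A => π b Ω)).topologicalClosure = ⊤)
    -- ω is α-invariant
    (hinv : ∀ t : ℝ, ∀ a : A, ω (α t a) = ω a) :
    -- (i) separating + mixing → weak asymptotic abelianness
    ((∀ X ∈ Set.centralizer (Set.centralizer (Set.range fun b : A => π b)),
        X Ω = 0 → X = 0) →
      (∀ a b : A, Tendsto (fun t => ω (b * α t a)) atTop (nhds (ω a * ω b))) →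
      ∀ a b : A,
        WOTTendsto (fun t => π (α t a) * π b - π b * π (α t a)) atTop 0) ∧
    -- (ii) primary + weak asymptotic abelianness → mixing
    ((Set.centralizer (Set.centralizer (Set.range fun b : A => π b)) ∩
        Set.centralizer (Set.centralizer (Set.centralizer (Set.range fun b : A => π b))) =
        Set.range fun c : ℂ => c • (1 : H →L[ℂ] H)) →
      (∀ a b : A,
        WOTTendsto (fun t => π (α t a) * π b - π b * π (α t a)) atTop 0) →
      ∀ a b : A, Tendsto (fun t => ω (b * α t a)) atTop (nhds (ω a * ω b))) := by
  let _ : CStarAlgebra A := { }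
  have hstar : ∀ x ∈ Set.range fun b : A => π b, star x ∈ Set.range fun b : A => π b := by
    rintro _ ⟨b, rfl⟩
    exact ⟨star b, map_star π b⟩
  refine ⟨fun hsep hmix a b => ?_, fun hfac hab a b => ?_⟩
  · have hT := wotTendsto_smul_one_of_mem_centralizer
      (fun _ hx => Set.star_mem_centralizer' hstar hx)
      (topologicalClosure_span_centralizer_apply_eq_top hstar hsep) (norm_map_apply_le π α a)
      (fun t => Set.subset_centralizer_centralizer ⟨α t a, rfl⟩)
      (tendsto_inner_map_apply_of_mixing hrep hcyc hmix a)
    simpa only [smul_mul_assoc, one_mul, mul_smul_comm, mul_one, sub_self]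
      using (hT.mul_const (π b)).sub (hT.const_mul (π b))
  · refine (tendsto_iff_ultrafilter _ _ _).mpr fun U hU => ?_
    obtain ⟨c, hc⟩ := exists_wotTendsto_smul_one_of_centralizer_inter_eq hfac
      (norm_map_apply_le π α a) (fun t => ⟨α t a, rfl⟩) (by rintro _ ⟨b', rfl⟩; exact hab a b')
      U hU
    exact tendsto_mul_of_wotTendsto_smul_one hΩnorm hrep hinv hc b

/-- Let `ω` be an `α`-invariant state with GNS data `(π, H, Ω)`.
(i) If `Ω` is separating for `M = π(A)''` and `(A, α, ω)` is mixing, then `(A, α, ω)` is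
weakly asymptotically abelian.  (ii) Conversely, if `ω` is primary and `(A, α, ω)` is weakly
asymptotically abelian, then `(A, α, ω)` is mixing. -/
theorem stmt6
    {A : Type*} [NormedRing A] [StarRing A] [CStarRing A] [CompleteSpace A]
    [NormedAlgebra ℂ A] [StarModule ℂ A]
    {H : Type*} [NormedAddCommGroup H] [InnerProductSpace ℂ H] [CompleteSpace H]
    -- one-parameter group of *-automorphisms
    (α : ℝ → (A ≃⋆ₐ[ℂ] A))
    (hα0 : ∀ a : A, α 0 a = a)
    (hαadd : ∀ s t : ℝ, ∀ a : A, α (s + t) a = α s (α t a))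
    -- state
    (ω : A →ₗ[ℂ] ℂ)
    (hω1 : ω 1 = 1)
    (hωpos : ∀ a : A, 0 ≤ ω (star a * a))
    -- GNS data
    (π : A →⋆ₐ[ℂ] (H →L[ℂ] H)) (Ω : H) (hΩnorm : ‖Ω‖ = 1)
    (hrep : ∀ a : A, ω a = ⟪Ω, π a Ω⟫)
    (hcyc : (Submodule.span ℂ (Set.range fun b : A => π b Ω)).topologicalClosure = ⊤)
    -- ω is α-invariant
    (hinv : ∀ t : ℝ, ∀ a : A, ω (α t a) = ω a) :
    -- (i) separating + mixing → weak asymptotic abelianness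
    ((∀ X ∈ Set.centralizer (Set.centralizer (Set.range fun b : A => π b)),
        X Ω = 0 → X = 0) →
      (∀ a b : A, Tendsto (fun t => ω (b * α t a)) atTop (nhds (ω a * ω b))) →
      ∀ a b : A,
        WOTTendsto (fun t => π (α t a) * π b - π b * π (α t a)) atTop 0) ∧
    -- (ii) primary + weak asymptotic abelianness → mixing
    ((Set.centralizer (Set.centralizer (Set.range fun b : A => π b)) ∩
        Set.centralizer (Set.centralizer (Set.centralizer (Set.range fun b : A => π b))) =
        Set.range fun c : ℂ => c • (1 : H →L[ℂ] H)) →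
      (∀ a b : A,
        WOTTendsto (fun t => π (α t a) * π b - π b * π (α t a)) atTop 0) →
      ∀ a b : A, Tendsto (fun t => ω (b * α t a)) atTop (nhds (ω a * ω b))) :=
  stmt6_general α ω π Ω hΩnorm hrep hcyc hinv
end

section
/- Fix ζ ∈ ℝ. For f, g ∈ L²(ℝ³; ℂ), define h : ℝ × S² → ℂ (almost everywhere) by h(s, ω) = s · f(s·ω) for s > 0 and h(s, ω) = s · e^{iζ} · g(−s·ω) for s < 0. Then h belongs to L²(ℝ × S²; ℂ) (with respect to the product of Lebesgue measure ds on ℝ and the surface measure dΩ on S²) and ‖h‖²_{L²(ℝ×S²)} = ‖f‖²_{L²(ℝ³)} + ‖g‖²_{L²(ℝ³)}; moreover the induced linear map L²(ℝ³; ℂ) ⊕ L²(ℝ³; ℂ) → L²(ℝ × S²; ℂ), (f, g) ↦ h, is surjective. Hence this Jakšić–Pillet gluing map is a unitary (a surjective linear isometry) from L²(ℝ³) ⊕ L²(ℝ³) onto L²(ℝ × S²). -/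
/-!
In polar coordinates `x = q • ω`, the polar formula says that `μ` is `q² dq ⊗ μS` on
`(0, ∞) × S`. The factor `s` in the gluing map supplies exactly this weight `s²` against `ds`, so
each half `{s > 0}`, `{s < 0}` of `ℝ × S` carries an isometric copy of `L²(μ)` (the phase `c` has
modulus one), and by the same change of variables `μ`-null sets pull back to null sets, so gluing
respects a.e. equality. Off the null set `{s = 0}` the map is inverted explicitly by
`f x = h (‖x‖, x / ‖x‖) / ‖x‖` and `g x = h (-‖x‖, x / ‖x‖) / (-‖x‖ c)`, and the isometry itself
shows that this `f` and `g` are square integrable. Tonelli needs `μS` to be s-finite; it is even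
finite, as the polar formula tested on the unit ball shows.
-/

open MeasureTheory
open scoped ENNReal

open Metric Set

theorem eLpNorm_two_sq_eq_lintegral {α F : Type*} [MeasurableSpace α] [NormedAddCommGroup F]
    (μ : Measure α) (f : α → F) : eLpNorm f 2 μ ^ 2 = ∫⁻ x, ‖f x‖ₑ ^ 2 ∂μ := by
  simpa using eLpNorm_nnreal_pow_eq_lintegral (μ := μ) (f := f) (p := 2) two_ne_zero

theorem memLp_two_of_eLpNorm_sq_lt_top {α F : Type*} [MeasurableSpace α] [NormedAddCommGroup F]
    {μ : Measure α} {f : α → F} (hf : AEStronglyMeasurable f μ) (h : eLpNorm f 2 μ ^ 2 < ⊤) :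
    MemLp f 2 μ :=
  ⟨hf, (ENNReal.pow_lt_top_iff.1 h).resolve_right two_ne_zero⟩

theorem Complex.enorm_ofReal_sq (s : ℝ) : ‖(s : ℂ)‖ₑ ^ 2 = ENNReal.ofReal (s ^ 2) := by
  rw [← ofReal_norm, Complex.norm_real, Real.norm_eq_abs, ← ENNReal.ofReal_pow (abs_nonneg s),
    sq_abs]

theorem measurePreserving_neg_prod {β : Type*} [MeasurableSpace β] (ν : Measure β) [SFinite ν] :
    MeasurePreserving (Prod.map (Neg.neg : ℝ → ℝ) id) (volume.prod ν) (volume.prod ν) :=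
  (Measure.measurePreserving_neg _).prod (.id _)

section Polar

variable {E : Type*} [NormedAddCommGroup E] [NormedSpace ℝ E] {c : ℂ} {f g f' g' : E → ℂ}

noncomputable def polarGlue (c : ℂ) (f g : E → ℂ) (p : ℝ × sphere (0 : E) 1) : ℂ :=
  if 0 < p.1 then (p.1 : ℂ) * f (p.1 • (p.2 : E)) else (p.1 : ℂ) * c * g ((-p.1) • (p.2 : E))

theorem enorm_polarGlue_sq (hc : ‖c‖ = 1) (p : ℝ × sphere (0 : E) 1) :
    ‖polarGlue c f g p‖ₑ ^ 2 =
      (Ioi 0 ×ˢ univ).indicator (fun p : ℝ × sphere (0 : E) 1 =>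
          ‖f (p.1 • (p.2 : E))‖ₑ ^ 2 * ENNReal.ofReal (p.1 ^ 2)) p +
        (Iio 0 ×ˢ univ).indicator (fun p : ℝ × sphere (0 : E) 1 =>
          ‖g ((-p.1) • (p.2 : E))‖ₑ ^ 2 * ENNReal.ofReal (p.1 ^ 2)) p := by
  have hc' : ‖c‖ₑ = 1 := by simp [enorm_eq_nnnorm, ← NNReal.coe_eq_one, hc]
  rcases lt_trichotomy p.1 0 with hp | hp | hp
  · simp [polarGlue, hp, hp.not_gt, enorm_mul, hc', mul_pow, Complex.enorm_ofReal_sq, mul_comm]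
  · simp [polarGlue, hp]
  · simp [polarGlue, hp, hp.not_gt, enorm_mul, mul_pow, Complex.enorm_ofReal_sq, mul_comm]

open Classical in
noncomputable def sphereRetraction (ω₀ : sphere (0 : E) 1) (x : E) : sphere (0 : E) 1 :=
  ⟨if x = 0 then ω₀ else ‖x‖⁻¹ • x, by
    split_ifs with hx
    · exact ω₀.2
    · simp [norm_smul, hx]⟩

theorem sphereRetraction_smul (ω₀ : sphere (0 : E) 1) {q : ℝ} (hq : 0 < q)
    (ω : sphere (0 : E) 1) : sphereRetraction ω₀ (q • (ω : E)) = ω := by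
  ext1
  simp [sphereRetraction, hq.ne', ne_zero_of_mem_unit_sphere ω, norm_smul, abs_of_pos hq,
    smul_smul]

noncomputable def polarUnglue (ω₀ : sphere (0 : E) 1) (σ : ℝ) (b : ℂ)
    (h : ℝ × sphere (0 : E) 1 → ℂ) (x : E) : ℂ :=
  ((σ * ‖x‖ : ℝ) * b : ℂ)⁻¹ * h (σ * ‖x‖, sphereRetraction ω₀ x)

theorem polarGlue_polarUnglue (ω₀ : sphere (0 : E) 1) (hc : c ≠ 0)
    (h : ℝ × sphere (0 : E) 1 → ℂ) {p : ℝ × sphere (0 : E) 1} (hp : p.1 ≠ 0) :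
    polarGlue c (polarUnglue ω₀ 1 1 h) (polarUnglue ω₀ (-1) c h) p = h p := by
  obtain ⟨s, ω⟩ := p
  rcases hp.lt_or_gt with hs | hs
  · have hω : sphereRetraction ω₀ (-(s • (ω : E))) = ω := by
      rw [← neg_smul]
      exact sphereRetraction_smul ω₀ (neg_pos.2 hs) ω
    have hs0 : (s : ℂ) ≠ 0 := Complex.ofReal_ne_zero.2 hs.ne
    simp [polarGlue, polarUnglue, hs.not_gt, hω, norm_smul, abs_of_neg hs]
    field_simp
  · simp [polarGlue, polarUnglue, hs, sphereRetraction_smul ω₀ hs, norm_smul, abs_of_pos hs,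
      hs.ne']

variable [MeasurableSpace E]

def HasPolarDecomposition (μ : Measure E) (μS : Measure (sphere (0 : E) 1)) : Prop :=
  ∀ F : E → ℝ≥0∞, Measurable F →
    ∫⁻ x, F x ∂μ = ∫⁻ q in Ioi (0 : ℝ), (∫⁻ ω, F (q • (ω : E)) ∂μS) * ENNReal.ofReal (q ^ 2)

variable [BorelSpace E] {μ : Measure E} {μS : Measure (sphere (0 : E) 1)}

theorem measurable_smul_sphere : Measurable fun p : ℝ × sphere (0 : E) 1 => p.1 • (p.2 : E) :=
  measurable_fst.smul (measurable_subtype_coe.comp measurable_snd)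

theorem measurable_sphereRetraction (ω₀ : sphere (0 : E) 1) :
    Measurable (sphereRetraction ω₀) :=
  (Measurable.ite measurableSet_eq measurable_const
    (measurable_norm.inv.smul measurable_id)).subtype_mk

theorem measurable_polarUnglue (ω₀ : sphere (0 : E) 1) (σ : ℝ) (b : ℂ)
    {h : ℝ × sphere (0 : E) 1 → ℂ} (hh : Measurable h) : Measurable (polarUnglue ω₀ σ b h) := by
  have := measurable_sphereRetraction ω₀
  unfold polarUnglue
  fun_prop

theorem measurable_polarGlue (hf : Measurable f) (hg : Measurable g) :
    Measurable (polarGlue c f g) :=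
  Measurable.ite (measurableSet_lt measurable_const measurable_fst)
    ((Complex.measurable_ofReal.comp measurable_fst).mul (hf.comp measurable_smul_sphere))
    (((Complex.measurable_ofReal.comp measurable_fst).mul_const c).mul
      (hg.comp (measurable_smul_sphere.comp (measurable_fst.neg.prodMk measurable_snd))))

namespace HasPolarDecomposition

theorem isFiniteMeasure [ProperSpace E] [IsFiniteMeasureOnCompacts μ]
    (hμS : HasPolarDecomposition μ μS) : IsFiniteMeasure μS := by
  have hball : MeasurableSet (ball (0 : E) 1) := measurableSet_ball
  have hF : Measurable ((ball (0 : E) 1).indicator (1 : E → ℝ≥0∞)) :=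
    measurable_one.indicator hball
  have hq : ∫⁻ q in Ioo (0 : ℝ) 1, ENNReal.ofReal (q ^ 2) ≠ 0 := by
    refine ((setLIntegral_pos_iff (by fun_prop)).2 ?_).ne'
    refine lt_of_lt_of_le (by simp) (measure_mono fun q hq => ⟨?_, hq⟩)
    simpa [Function.mem_support] using hq.1.ne'
  have hinner : ∀ q ∈ Ioo (0 : ℝ) 1,
      ∫⁻ ω, (ball (0 : E) 1).indicator 1 (q • (ω : E)) ∂μS = μS univ := by
    rintro q ⟨hq0, hq1⟩
    have : ∀ ω : sphere (0 : E) 1, q • (ω : E) ∈ ball (0 : E) 1 := fun ω => by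
      simpa [norm_smul, abs_of_pos hq0] using hq1
    simp [indicator_of_mem (this _)]
  have hle : μS univ * ∫⁻ q in Ioo (0 : ℝ) 1, ENNReal.ofReal (q ^ 2) ≤ μ (ball 0 1) :=
    calc μS univ * ∫⁻ q in Ioo (0 : ℝ) 1, ENNReal.ofReal (q ^ 2)
        = ∫⁻ q in Ioo (0 : ℝ) 1,
            (∫⁻ ω, (ball (0 : E) 1).indicator 1 (q • (ω : E)) ∂μS) * ENNReal.ofReal (q ^ 2) := by
          rw [← lintegral_const_mul _ (by fun_prop)]
          exact setLIntegral_congr_fun measurableSet_Ioo fun q hq => by rw [hinner q hq]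
      _ ≤ _ := lintegral_mono_set Ioo_subset_Ioi_self
      _ = μ (ball 0 1) := by rw [← hμS _ hF, lintegral_indicator_one hball]
  exact ⟨ENNReal.lt_top_of_mul_ne_top_left (ne_top_of_le_ne_top measure_ball_lt_top.ne hle) hq⟩

theorem setLIntegral_Ioi_prod [SFinite μS] (hμS : HasPolarDecomposition μ μS) {F : E → ℝ≥0∞}
    (hF : Measurable F) :
    ∫⁻ p in Ioi (0 : ℝ) ×ˢ univ, F (p.1 • (p.2 : E)) * ENNReal.ofReal (p.1 ^ 2)
      ∂(volume.prod μS) = ∫⁻ x, F x ∂μ := by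
  have hm : Measurable fun p : ℝ × sphere (0 : E) 1 =>
      F (p.1 • (p.2 : E)) * ENNReal.ofReal (p.1 ^ 2) :=
    (hF.comp measurable_smul_sphere).mul (by fun_prop)
  rw [setLIntegral_prod _ hm.aemeasurable, hμS F hF]
  refine setLIntegral_congr_fun measurableSet_Ioi fun q _ => ?_
  simp only [Measure.restrict_univ]
  exact lintegral_mul_const' _ _ ENNReal.ofReal_ne_top

theorem setLIntegral_Iio_prod [SFinite μS] (hμS : HasPolarDecomposition μ μS) {F : E → ℝ≥0∞}
    (hF : Measurable F) :
    ∫⁻ p in Iio (0 : ℝ) ×ˢ univ, F ((-p.1) • (p.2 : E)) * ENNReal.ofReal (p.1 ^ 2)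
      ∂(volume.prod μS) = ∫⁻ x, F x ∂μ := by
  have hemb : MeasurableEmbedding (Prod.map (Neg.neg : ℝ → ℝ) (id : sphere (0 : E) 1 → _)) :=
    ((Homeomorph.neg ℝ).prodCongr (Homeomorph.refl _)).measurableEmbedding
  rw [← hμS.setLIntegral_Ioi_prod hF,
    ← (measurePreserving_neg_prod μS).setLIntegral_comp_preimage_emb hemb _ (Ioi 0 ×ˢ univ)]
  simp [preimage_prod_map_prod]

theorem ae_prod_of_ae_pos [SFinite μS] (hμS : HasPolarDecomposition μ μS) {P : E → Prop}
    (hP : ∀ᵐ x ∂μ, P x) :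
    ∀ᵐ p ∂((volume : Measure ℝ).prod μS), 0 < p.1 → P (p.1 • (p.2 : E)) := by
  obtain ⟨N, hPN, hN, hN0⟩ := exists_measurable_superset_of_null (ae_iff.1 hP)
  have hF : Measurable (N.indicator (1 : E → ℝ≥0∞)) := measurable_one.indicator hN
  have h0 : ∫⁻ p in Ioi (0 : ℝ) ×ˢ univ, N.indicator 1 (p.1 • (p.2 : E)) *
      ENNReal.ofReal (p.1 ^ 2) ∂(volume.prod μS) = 0 := by
    rw [hμS.setLIntegral_Ioi_prod hF, lintegral_indicator_one hN, hN0]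
  have hm : Measurable fun p : ℝ × sphere (0 : E) 1 =>
      N.indicator 1 (p.1 • (p.2 : E)) * ENNReal.ofReal (p.1 ^ 2) :=
    (hF.comp measurable_smul_sphere).mul (by fun_prop)
  filter_upwards [(setLIntegral_eq_zero_iff (measurableSet_Ioi.prod MeasurableSet.univ) hm).1 h0]
    with p hp hp1
  by_contra hnP
  simpa [indicator_of_mem (hPN hnP), hp1.ne'] using hp ⟨hp1, trivial⟩

theorem ae_prod_of_ae_neg [SFinite μS] (hμS : HasPolarDecomposition μ μS) {P : E → Prop}
    (hP : ∀ᵐ x ∂μ, P x) :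
    ∀ᵐ p ∂((volume : Measure ℝ).prod μS), p.1 < 0 → P ((-p.1) • (p.2 : E)) := by
  filter_upwards [(measurePreserving_neg_prod μS).quasiMeasurePreserving.ae
    (hμS.ae_prod_of_ae_pos hP)] with p hp hp1
  exact hp (neg_pos.2 hp1)

end HasPolarDecomposition

theorem polarGlue_ae_congr [SFinite μS] (hμS : HasPolarDecomposition μ μS) (hf : f =ᵐ[μ] f')
    (hg : g =ᵐ[μ] g') :
    polarGlue c f g =ᵐ[(volume : Measure ℝ).prod μS] polarGlue c f' g' := by
  filter_upwards [hμS.ae_prod_of_ae_pos hf, hμS.ae_prod_of_ae_neg hg] with p hpos hneg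
  rcases lt_trichotomy p.1 0 with hp | hp | hp
  · simp only [polarGlue, if_neg hp.not_gt, hneg hp]
  · simp [polarGlue, hp]
  · simp only [polarGlue, if_pos hp, hpos hp]

theorem lintegral_enorm_polarGlue_sq [SFinite μS] (hμS : HasPolarDecomposition μ μS)
    (hc : ‖c‖ = 1) (hf : Measurable f) (hg : Measurable g) :
    ∫⁻ p, ‖polarGlue c f g p‖ₑ ^ 2 ∂((volume : Measure ℝ).prod μS) =
      ∫⁻ x, ‖f x‖ₑ ^ 2 ∂μ + ∫⁻ x, ‖g x‖ₑ ^ 2 ∂μ := by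
  have hIoi : MeasurableSet (Ioi (0 : ℝ) ×ˢ (univ : Set (sphere (0 : E) 1))) :=
    measurableSet_Ioi.prod .univ
  have hIio : MeasurableSet (Iio (0 : ℝ) ×ˢ (univ : Set (sphere (0 : E) 1))) :=
    measurableSet_Iio.prod .univ
  simp_rw [enorm_polarGlue_sq hc]
  rw [lintegral_add_left (Measurable.indicator (by fun_prop) hIoi), lintegral_indicator hIoi,
    lintegral_indicator hIio, hμS.setLIntegral_Ioi_prod (hf.enorm.pow_const 2),
    hμS.setLIntegral_Iio_prod (hg.enorm.pow_const 2)]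

theorem eLpNorm_polarGlue_sq [SFinite μS] (hμS : HasPolarDecomposition μ μS) (hc : ‖c‖ = 1)
    (hf : AEStronglyMeasurable f μ) (hg : AEStronglyMeasurable g μ) :
    eLpNorm (polarGlue c f g) 2 ((volume : Measure ℝ).prod μS) ^ 2 =
      eLpNorm f 2 μ ^ 2 + eLpNorm g 2 μ ^ 2 := by
  rw [eLpNorm_congr_ae (polarGlue_ae_congr hμS hf.ae_eq_mk hg.ae_eq_mk),
    eLpNorm_congr_ae hf.ae_eq_mk, eLpNorm_congr_ae hg.ae_eq_mk]
  simp only [eLpNorm_two_sq_eq_lintegral]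
  exact lintegral_enorm_polarGlue_sq hμS hc hf.measurable_mk hg.measurable_mk

theorem memLp_polarGlue [SFinite μS] (hμS : HasPolarDecomposition μ μS) (hc : ‖c‖ = 1)
    (hf : MemLp f 2 μ) (hg : MemLp g 2 μ) :
    MemLp (polarGlue c f g) 2 ((volume : Measure ℝ).prod μS) := by
  refine memLp_two_of_eLpNorm_sq_lt_top
    ((measurable_polarGlue hf.1.measurable_mk hg.1.measurable_mk).aestronglyMeasurable.congr
      (polarGlue_ae_congr hμS hf.1.ae_eq_mk hg.1.ae_eq_mk).symm) ?_
  rw [eLpNorm_polarGlue_sq hμS hc hf.1 hg.1]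
  exact ENNReal.add_lt_top.2 ⟨ENNReal.pow_lt_top hf.2, ENNReal.pow_lt_top hg.2⟩

theorem exists_polarGlue_ae_eq [Nontrivial E] [SFinite μS] (hμS : HasPolarDecomposition μ μS)
    (hc : ‖c‖ = 1) {h : ℝ × sphere (0 : E) 1 → ℂ}
    (hh : MemLp h 2 ((volume : Measure ℝ).prod μS)) :
    ∃ f g : E → ℂ, MemLp f 2 μ ∧ MemLp g 2 μ ∧
      polarGlue c f g =ᵐ[(volume : Measure ℝ).prod μS] h := by
  obtain ⟨ω₀⟩ : Nonempty (sphere (0 : E) 1) :=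
    (NormedSpace.sphere_nonempty.2 zero_le_one).to_subtype
  set f := polarUnglue ω₀ 1 1 (hh.1.mk h)
  set g := polarUnglue ω₀ (-1) c (hh.1.mk h)
  have hfm : Measurable f := measurable_polarUnglue ω₀ 1 1 hh.1.measurable_mk
  have hgm : Measurable g := measurable_polarUnglue ω₀ (-1) c hh.1.measurable_mk
  have hglue : polarGlue c f g =ᵐ[(volume : Measure ℝ).prod μS] h := by
    refine Filter.EventuallyEq.trans ?_ hh.1.ae_eq_mk.symm
    filter_upwards [Measure.quasiMeasurePreserving_fst.ae (Measure.ae_ne volume 0)] with p hp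
    exact polarGlue_polarUnglue ω₀ (norm_ne_zero_iff.1 (hc ▸ one_ne_zero)) _ hp
  have hsq := eLpNorm_polarGlue_sq hμS hc hfm.aestronglyMeasurable hgm.aestronglyMeasurable
  rw [eLpNorm_congr_ae hglue] at hsq
  obtain ⟨hf, hg⟩ := ENNReal.add_lt_top.1 (hsq ▸ ENNReal.pow_lt_top hh.2)
  exact ⟨f, g, memLp_two_of_eLpNorm_sq_lt_top hfm.aestronglyMeasurable hf,
    memLp_two_of_eLpNorm_sq_lt_top hgm.aestronglyMeasurable hg, hglue⟩

end Polar

/-- The Jakšić–Pillet gluing map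
`(f, g) ↦ h`, `h (s, ω) = s · f (s • ω)` for `s > 0` and `h (s, ω) = s · e^{iζ} · g ((-s) • ω)`
for `s < 0`, sends a pair of `L²` functions on `ℝ³` to an `L²` function on `ℝ × S²` with
`‖h‖² = ‖f‖² + ‖g‖²`, and it is surjective onto `L² (ℝ × S²)`; hence it induces a unitary
`L²(ℝ³) ⊕ L²(ℝ³) → L²(ℝ × S²)`.  Here `μS` is the surface measure on the unit sphere `S²`,
characterized by the spherical-coordinates formula. -/
theorem stmt9 (ζ : ℝ)
    (μS : Measure (Metric.sphere (0 : EuclideanSpace ℝ (Fin 3)) 1))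
    -- μS is the surface measure: ∫_{ℝ³} F = ∫_0^∞ ∫_{S²} F (q • ω) q² dμS(ω) dq
    (hμS : ∀ F : EuclideanSpace ℝ (Fin 3) → ℝ≥0∞, Measurable F →
      ∫⁻ x, F x = ∫⁻ q in Set.Ioi (0 : ℝ),
        (∫⁻ ω, F (q • (ω : EuclideanSpace ℝ (Fin 3))) ∂μS) * ENNReal.ofReal (q ^ 2))
    -- the gluing map
    (glue : (EuclideanSpace ℝ (Fin 3) → ℂ) → (EuclideanSpace ℝ (Fin 3) → ℂ) →
      (ℝ × Metric.sphere (0 : EuclideanSpace ℝ (Fin 3)) 1) → ℂ)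
    (hglue : ∀ f g p, glue f g p =
      if 0 < p.1 then (p.1 : ℂ) * f (p.1 • (p.2 : EuclideanSpace ℝ (Fin 3)))
      else (p.1 : ℂ) * Complex.exp (Complex.I * (ζ : ℂ)) *
        g ((-p.1) • (p.2 : EuclideanSpace ℝ (Fin 3)))) :
    -- the glued function is L² with ‖h‖² = ‖f‖² + ‖g‖² (isometry on L² ⊕ L²)
    (∀ f g : EuclideanSpace ℝ (Fin 3) → ℂ,
      MemLp f 2 volume → MemLp g 2 volume →
      MemLp (glue f g) 2 (volume.prod μS) ∧
      eLpNorm (glue f g) 2 (volume.prod μS) ^ 2 =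
        eLpNorm f 2 volume ^ 2 + eLpNorm g 2 volume ^ 2) ∧
    -- surjectivity onto L²(ℝ × S²)
    (∀ h : (ℝ × Metric.sphere (0 : EuclideanSpace ℝ (Fin 3)) 1) → ℂ,
      MemLp h 2 (volume.prod μS) →
      ∃ f g : EuclideanSpace ℝ (Fin 3) → ℂ,
        MemLp f 2 volume ∧ MemLp g 2 volume ∧
        glue f g =ᵐ[volume.prod μS] h) := by
  have hpolar : HasPolarDecomposition volume μS := hμS
  have : IsFiniteMeasure μS := hpolar.isFiniteMeasure
  have hc : ‖Complex.exp (Complex.I * ζ)‖ = 1 := Complex.norm_exp_I_mul_ofReal ζ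
  obtain rfl : glue = polarGlue (Complex.exp (Complex.I * ζ)) :=
    funext fun f => funext fun g => funext fun p => hglue f g p
  exact ⟨fun f g hf hg =>
      ⟨memLp_polarGlue hpolar hc hf hg, eLpNorm_polarGlue_sq hpolar hc hf.1 hg.1⟩,
    fun h hh => exists_polarGlue_ae_eq hpolar hc hh⟩
end
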